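/- arXiv:2506.05295 — 3 statements merged into one kernel-verified Lean document; each statement's English description precedes it below -/
import Mathlib

section
/- Self-consistency lower bound via Berry–Esseen: let X_1,…,X_n be i.i.d. with P(X_i = 1) = (1+Δ)/2 and P(X_i = −1) = (1−Δ)/2 where 0 < Δ < 10^{-5}. If 1/Δ ≤ n ≤ 1/Δ², then P(Σ_{i=1}^n X_i < 0) ≥ 0.01. -/
/-!
Compare with the uniform measure. If `x` has `k` true coordinates, its sign sum is `2k - n` and
its probability is `2⁻ⁿ (1 - Δ²)^k (1 - Δ)^(n - 2k)`; on the window `-2√n ≤ 2k - n < 0` this is at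
least `2⁻ⁿ / 16`, because `kΔ² ≤ nΔ²/2 ≤ 1/2` and `(n - 2k)Δ ≤ 2√n Δ ≤ 2`. At least a fifth of
the `2ⁿ` points lie in the window: by symmetry half of the points with nonzero sum have negative
sum, the sum vanishes on at most `2ⁿ/√(n+1)` points (a central binomial coefficient), and since
the sum has second moment `n` under the uniform measure, Chebyshev leaves at most `2ⁿ/4` points
with `|sum| ≥ 2√n`. The probability is therefore at least `1/80`.
-/

open Finset Real MeasureTheory
open scoped NNReal ENNReal

lemma Nat.centralBinom_sq_mul_le (m : ℕ) : m.centralBinom ^ 2 * (2 * m + 1) ≤ 16 ^ m := by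
  induction m with
  | zero => simp
  | succ m ih =>
    refine le_of_mul_le_mul_left ?_ (pow_pos m.succ_pos 2)
    calc (m + 1) ^ 2 * ((m + 1).centralBinom ^ 2 * (2 * (m + 1) + 1))
        = ((m + 1) * (m + 1).centralBinom) ^ 2 * (2 * m + 3) := by ring
      _ = 4 * (m.centralBinom ^ 2 * (2 * m + 1)) * ((2 * m + 1) * (2 * m + 3)) := by
          rw [Nat.succ_mul_centralBinom_succ]; ring
      _ ≤ 4 * 16 ^ m * (4 * (m + 1) ^ 2) := Nat.mul_le_mul (Nat.mul_le_mul_left 4 ih) (by nlinarith)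
      _ = (m + 1) ^ 2 * 16 ^ (m + 1) := by ring

section Hypercube

variable {ι : Type*} [Fintype ι]

def spin (b : Bool) : ℝ := if b then 1 else -1

def spinSum (x : ι → Bool) : ℝ := ∑ i, spin (x i)

def trueCount (x : ι → Bool) : ℕ := #{i | x i}

@[simp] lemma spin_not (b : Bool) : spin (!b) = -spin b := by
  cases b <;> simp [spin]

@[simp] lemma spin_mul_self (b : Bool) : spin b * spin b = 1 := by
  cases b <;> simp [spin]

lemma spinSum_not (x : ι → Bool) : spinSum (fun i => !x i) = -spinSum x := by
  simp [spinSum]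

lemma spinSum_eq (x : ι → Bool) : spinSum x = 2 * trueCount x - Fintype.card ι := by
  have h : ∀ i, spin (x i) = 2 * (if x i then 1 else 0) - 1 := fun i => by
    cases x i <;> norm_num [spin]
  simp only [spinSum, h, sum_sub_distrib, ← mul_sum, sum_boole]
  simp [trueCount]

variable [DecidableEq ι]

lemma sum_spin_mul_spin_of_ne {i j : ι} (hij : i ≠ j) :
    ∑ x : ι → Bool, spin (x i) * spin (x j) = 0 := by
  have hflip : Function.Involutive fun x : ι → Bool => Function.update x i (!x i) := fun x => by
    ext k; by_cases hk : k = i <;> simp [hk]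
  have h := Equiv.sum_comp hflip.toPerm fun x : ι → Bool => spin (x i) * spin (x j)
  simp only [Function.Involutive.coe_toPerm, Function.update_self, Function.update_of_ne hij.symm,
    spin_not, neg_mul, sum_neg_distrib] at h
  linarith

lemma sum_spinSum_sq : ∑ x : ι → Bool, spinSum x ^ 2 = Fintype.card ι * 2 ^ Fintype.card ι := by
  calc ∑ x : ι → Bool, spinSum x ^ 2
      = ∑ i, ∑ j, ∑ x : ι → Bool, spin (x i) * spin (x j) := by
        simp_rw [spinSum, sq, sum_mul_sum]
        rw [sum_comm]
        exact sum_congr rfl fun i _ => sum_comm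
    _ = ∑ i : ι, ∑ x : ι → Bool, spin (x i) * spin (x i) :=
        sum_congr rfl fun i _ =>
          sum_eq_single i (fun j _ hji => sum_spin_mul_spin_of_ne hji.symm) (by simp)
    _ = Fintype.card ι * 2 ^ Fintype.card ι := by simp

lemma card_le_abs_spinSum_mul_sq_le {a : ℝ} (ha : 0 ≤ a) :
    #{x : ι → Bool | a ≤ |spinSum x|} * a ^ 2 ≤ Fintype.card ι * 2 ^ Fintype.card ι := by
  calc #{x : ι → Bool | a ≤ |spinSum x|} * a ^ 2
      = ∑ x ∈ {x : ι → Bool | a ≤ |spinSum x|}, a ^ 2 := by simp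
    _ ≤ ∑ x ∈ {x : ι → Bool | a ≤ |spinSum x|}, spinSum x ^ 2 :=
        sum_le_sum fun x hx => by simpa using pow_le_pow_left₀ ha (mem_filter.1 hx).2 2
    _ ≤ ∑ x : ι → Bool, spinSum x ^ 2 :=
        sum_le_sum_of_subset_of_nonneg (filter_subset _ _) fun _ _ _ => sq_nonneg _
    _ = Fintype.card ι * 2 ^ Fintype.card ι := sum_spinSum_sq

lemma card_spinSum_neg_eq :
    #{x : ι → Bool | spinSum x < 0} = #{x : ι → Bool | 0 < spinSum x} := by
  refine card_nbij' (fun x i => !x i) (fun x i => !x i) ?_ ?_ ?_ ?_ <;> intro x <;>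
    simp [spinSum_not]

lemma card_trueCount_eq (k : ℕ) :
    #{x : ι → Bool | trueCount x = k} = (Fintype.card ι).choose k := by
  rw [← card_univ, ← card_powersetCard]
  refine card_bij' (fun x _ => ({i | x i = true} : Finset ι)) (fun s _ i => i ∈ s) ?_ ?_ ?_ ?_
  iterate 2
    intro x hx
    simp only [mem_filter, mem_univ, true_and, mem_powersetCard] at hx ⊢
    simpa [trueCount] using hx
  all_goals intro x _; ext; simp

lemma card_spinSum_eq_zero_sq_mul_le :
    #{x : ι → Bool | spinSum x = 0} ^ 2 * (Fintype.card ι + 1) ≤ 4 ^ Fintype.card ι := by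
  obtain ⟨m, hm | hm⟩ := Nat.even_or_odd' (Fintype.card ι)
  · have hC :
        ({x | spinSum x = 0} : Finset (ι → Bool)) = ({x | trueCount x = m} : Finset (ι → Bool)) :=
      filter_congr fun x _ => by rw [spinSum_eq, hm, sub_eq_zero]; norm_cast; omega
    rw [hC, card_trueCount_eq, hm, ← Nat.centralBinom_eq_two_mul_choose, pow_mul]
    exact Nat.centralBinom_sq_mul_le m
  · have hC : ({x | spinSum x = 0} : Finset (ι → Bool)) = ∅ :=
      filter_false_of_mem fun x _ => by rw [spinSum_eq, hm, sub_eq_zero]; norm_cast; omega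
    simp [hC]

lemma card_spinSum_mem_Ico (hn : 99 ≤ Fintype.card ι) :
    (2 ^ Fintype.card ι / 5 : ℝ) ≤
      #{x : ι → Bool | spinSum x ∈ Set.Ico (-2 * √(Fintype.card ι)) 0} := by
  set N := Fintype.card ι
  have hcover :
      2 ^ N ≤ 2 * #{x : ι → Bool | spinSum x < 0} + #{x : ι → Bool | spinSum x = 0} := by
    calc 2 ^ N = #(univ : Finset (ι → Bool)) := by simp [N]
      _ ≤ #(filter (spinSum · < 0) univ ∪ filter (0 < spinSum ·) univ ∪
            filter (spinSum · = 0) univ) :=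
          card_le_card fun x _ => by simpa [or_comm, or_assoc] using lt_trichotomy (spinSum x) 0
      _ ≤ _ := (card_union_le _ _).trans (Nat.add_le_add_right (card_union_le _ _) _)
      _ = _ := by rw [← card_spinSum_neg_eq, two_mul]
  have hneg : #{x : ι → Bool | spinSum x < 0} ≤
      #{x : ι → Bool | spinSum x ∈ Set.Ico (-2 * √N) 0} +
        #{x : ι → Bool | 2 * √N ≤ |spinSum x|} := by
    refine (card_le_card fun x hx => ?_).trans (card_union_le _ _)
    simp only [mem_filter, mem_univ, true_and, mem_union, Set.mem_Ico] at hx ⊢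
    by_cases h : -2 * √N ≤ spinSum x
    · exact Or.inl ⟨h, hx⟩
    · exact Or.inr (by rw [abs_of_neg hx]; linarith)
  have htail : 4 * (#{x : ι → Bool | 2 * √N ≤ |spinSum x|} : ℝ) ≤ 2 ^ N := by
    have h := card_le_abs_spinSum_mul_sq_le (ι := ι) (a := 2 * √N) (by positivity)
    rw [mul_pow, sq_sqrt N.cast_nonneg] at h
    exact le_of_mul_le_mul_right (by linarith) (by positivity : (0 : ℝ) < N)
  have hcenter : 10 * (#{x : ι → Bool | spinSum x = 0} : ℝ) ≤ 2 ^ N := by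
    have h : (#{x : ι → Bool | spinSum x = 0} : ℝ) ^ 2 * (N + 1) ≤ (2 ^ N) ^ 2 := by
      rw [← pow_mul, mul_comm N, pow_mul]
      norm_num
      exact_mod_cast card_spinSum_eq_zero_sq_mul_le (ι := ι)
    have hN : (99 : ℝ) ≤ N := by exact_mod_cast hn
    refine (pow_le_pow_iff_left₀ (by positivity) (by positivity) two_ne_zero).1 ?_
    nlinarith
  rify at hcover hneg
  linarith

end Hypercube

lemma one_eighth_le_one_sub_pow {Δ : ℝ} (h1 : Δ ≤ 1 / 100) {m : ℕ}
    (hm : m * Δ ≤ 2) : 1 / 8 ≤ (1 - Δ) ^ m := by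
  have hpos : 0 < 1 - Δ := by linarith
  have hlog : -(Δ / (1 - Δ)) ≤ log (1 - Δ) := by
    calc -(Δ / (1 - Δ)) = 1 - (1 - Δ)⁻¹ := by field_simp; ring
      _ ≤ log (1 - Δ) := one_sub_inv_le_log_of_pos hpos
  have hexp : -(2 + 1 / 20) ≤ m * log (1 - Δ) := by
    have : m * (Δ / (1 - Δ)) ≤ 2 + 1 / 20 := by
      rw [← mul_div_assoc, div_le_iff₀ hpos]; nlinarith
    nlinarith [(Nat.cast_nonneg m : (0 : ℝ) ≤ m)]
  calc (1 / 8 : ℝ) ≤ exp (-1) ^ 2 * (1 - 1 / 20) := by nlinarith [exp_neg_one_gt_d9]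
    _ ≤ exp (-1) ^ 2 * exp (-(1 / 20)) := by gcongr; exact one_sub_le_exp_neg _
    _ = exp (-(2 + 1 / 20)) := by rw [sq, ← exp_add, ← exp_add]; norm_num
    _ ≤ exp (m * log (1 - Δ)) := exp_le_exp.2 hexp
    _ = (1 - Δ) ^ m := by rw [exp_nat_mul, exp_log hpos]

lemma half_pow_div_sixteen_le_pow_mul_pow {Δ : ℝ} (h0 : 0 ≤ Δ) (h1 : Δ ≤ 1 / 100) {n k : ℕ}
    (hk : 2 * k ≤ n) (hn : n * Δ ^ 2 ≤ 1) (hgap : ((n - 2 * k : ℕ) : ℝ) * Δ ≤ 2) :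
    (1 / 2) ^ n / 16 ≤ ((1 + Δ) / 2) ^ k * ((1 - Δ) / 2) ^ (n - k) := by
  obtain ⟨m, rfl⟩ := Nat.exists_eq_add_of_le hk
  have hsq : 1 / 2 ≤ (1 - Δ ^ 2) ^ k := by
    have hkn : (2 * k : ℝ) ≤ (2 * k + m : ℕ) := by exact_mod_cast hk
    have := one_add_mul_sub_le_pow (a := 1 - Δ ^ 2) (by nlinarith) k
    nlinarith
  have hlin : 1 / 8 ≤ (1 - Δ) ^ m := one_eighth_le_one_sub_pow h1 (by simpa using hgap)
  calc (1 / 2 : ℝ) ^ (2 * k + m) / 16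
        ≤ (1 / 2) ^ (2 * k + m) * ((1 - Δ ^ 2) ^ k * (1 - Δ) ^ m) := by
        rw [div_eq_mul_inv]; gcongr; nlinarith
    _ = ((1 + Δ) / 2 * ((1 - Δ) / 2)) ^ k * ((1 - Δ) / 2) ^ m := by
        rw [show (1 + Δ) / 2 * ((1 - Δ) / 2) = (1 - Δ ^ 2) * (1 / 2) ^ 2 by ring,
          div_eq_mul_one_div (1 - Δ), mul_pow, mul_pow, ← pow_mul, pow_add]
        ring
    _ = ((1 + Δ) / 2) ^ k * ((1 - Δ) / 2) ^ (2 * k + m - k) := by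
        rw [show 2 * k + m - k = k + m by omega, mul_pow, pow_add]; ring

lemma pi_bernoulli_singleton {ι : Type*} [Fintype ι] (p : ℝ≥0) (hp : p ≤ 1) (x : ι → Bool) :
    Measure.pi (fun _ : ι => (PMF.bernoulli p hp).toMeasure) {x} =
      ((p ^ trueCount x * (1 - p) ^ (Fintype.card ι - trueCount x) : ℝ≥0) : ℝ≥0∞) := by
  rw [Measure.pi_singleton]
  simp_rw [PMF.toMeasure_apply_singleton _ _ (measurableSet_singleton _), PMF.bernoulli_apply,
    cond_eq_ite, ← ENNReal.ofNNReal_finsetProd, prod_ite, prod_const]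
  have := card_filter_add_card_filter_not (s := univ) (fun i => x i = true)
  rw [card_univ] at this
  rw [trueCount, ← this, Nat.add_sub_cancel_left]

lemma ofReal_le_pi_bernoulli_singleton {ι : Type*} [Fintype ι] {Δ : ℝ} (h0 : 0 ≤ Δ)
    (h1 : Δ ≤ 1 / 100) (hn : Fintype.card ι * Δ ^ 2 ≤ 1) (hp : Real.toNNReal ((1 + Δ) / 2) ≤ 1)
    {x : ι → Bool} (hx : spinSum x ∈ Set.Ico (-2 * √(Fintype.card ι)) 0) :
    ENNReal.ofReal ((1 / 2) ^ Fintype.card ι / 16) ≤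
      Measure.pi (fun _ : ι => (PMF.bernoulli (Real.toNNReal ((1 + Δ) / 2)) hp).toMeasure) {x} := by
  have hp' : (Real.toNNReal ((1 + Δ) / 2) : ℝ) = (1 + Δ) / 2 := Real.coe_toNNReal _ (by linarith)
  have hq : ((1 - Real.toNNReal ((1 + Δ) / 2) : ℝ≥0) : ℝ) = (1 - Δ) / 2 := by
    rw [NNReal.coe_sub hp, hp', NNReal.coe_one]; ring
  rw [pi_bernoulli_singleton, ← ENNReal.ofReal_coe_nnreal]
  refine ENNReal.ofReal_le_ofReal ?_
  simp only [NNReal.coe_mul, NNReal.coe_pow, hp', hq]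
  rw [Set.mem_Ico, spinSum_eq] at hx
  have hk : 2 * trueCount x < Fintype.card ι := by exact_mod_cast sub_neg.1 hx.2
  refine half_pow_div_sixteen_le_pow_mul_pow h0 h1 hk.le hn ?_
  have hsqrt : √(Fintype.card ι) * Δ ≤ 1 := by
    nlinarith [Real.sq_sqrt (Fintype.card ι).cast_nonneg, Real.sqrt_nonneg (Fintype.card ι)]
  rw [Nat.cast_sub hk.le]
  push_cast
  nlinarith

/-- Self-consistency lower bound via Berry–Esseen: for i.i.d. `±1` variables with
`P(X = 1) = (1+Δ)/2`, `P(X = -1) = (1-Δ)/2`, `0 < Δ < 10⁻⁵`, and `1/Δ ≤ n ≤ 1/Δ²`,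
the sum is negative with probability at least `0.01`. -/
theorem self_consistency_lower (Δ : ℝ) (h0 : 0 < Δ) (h1 : Δ < 1e-5)
    (hle : ENNReal.ofReal ((1 + Δ)/2) ≤ 1)
    (n : ℕ) (hn1 : 1/Δ ≤ (n : ℝ)) (hn2 : (n : ℝ) ≤ 1/Δ^2) :
    ENNReal.ofReal 0.01 ≤
      (Measure.pi fun _ : Fin n =>
        (PMF.bernoulli (Real.toNNReal ((1 + Δ)/2)) (ENNReal.coe_le_one_iff.mp hle)).toMeasure)
        {x | (∑ i, (if x i then (1:ℝ) else -1)) < 0} := by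
  set μ := Measure.pi fun _ : Fin n =>
    (PMF.bernoulli (Real.toNNReal ((1 + Δ)/2)) (ENNReal.coe_le_one_iff.mp hle)).toMeasure
  have hn : 99 ≤ n := by
    have : (99 : ℝ) ≤ n := le_trans (by rw [le_div_iff₀ h0]; linarith) hn1
    exact_mod_cast this
  have hnΔ : (n : ℝ) * Δ ^ 2 ≤ 1 := by rwa [le_div_iff₀ (by positivity)] at hn2
  set G : Finset (Fin n → Bool) := {x | spinSum x ∈ Set.Ico (-2 * √n) 0}
  have hG : (2 ^ n / 5 : ℝ) ≤ #G := by
    simpa only [Fintype.card_fin] using card_spinSum_mem_Ico (ι := Fin n) (by simpa)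
  calc ENNReal.ofReal 0.01
      ≤ #G * ENNReal.ofReal ((1 / 2) ^ n / 16) := by
        rw [← ENNReal.ofReal_natCast, ← ENNReal.ofReal_mul (by positivity)]
        refine ENNReal.ofReal_le_ofReal ?_
        have h2 : (2 : ℝ) ^ n * (1 / 2) ^ n = 1 := by rw [← mul_pow]; norm_num
        nlinarith [show (0 : ℝ) ≤ (1 / 2) ^ n by positivity]
    _ ≤ ∑ x ∈ G, μ {x} := by
        rw [← nsmul_eq_mul, ← sum_const]
        exact sum_le_sum fun x hx => by
          simpa only [Fintype.card_fin] using ofReal_le_pi_bernoulli_singleton (ι := Fin n) h0.le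
            (by linarith) (by simpa using hnΔ) _
            (by simpa only [Fintype.card_fin] using (mem_filter.1 hx).2)
    _ = μ G := sum_measure_singleton
    _ ≤ μ {x | (∑ i, (if x i then (1:ℝ) else -1)) < 0} :=
        measure_mono fun x hx => (mem_filter.1 hx).2.2
end

section
/- Separation between self-consistency and best-of-n: for every Δ ∈ (0, 10^{-7}), there exists a distribution p on a two-element set {1,2} with gap p(1) − p(2) = Δ such that: (a) best-of-n with n = ⌈10/Δ⌉ samples outputs the correct answer 1 with probability at least 0.99 (i.e., answer 1 appears among the samples), while (b) self-consistency (majority vote) with any n ≤ 1/Δ² samples fails with probability at least 0.01. -/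
/-!
Take `p true = (1 + Δ) / 2` and `p false = (1 - Δ) / 2`. Best-of-n misses `true` with probability
`((1 - Δ) / 2) ^ n ≤ 2⁻ⁿ`. For majority vote, a sample with `c` votes for `true` and `c + k` votes
for `false` has probability `2⁻ⁿ (1 - Δ²)ᶜ (1 - Δ)ᵏ ≥ 2⁻ⁿ (1 - Δ²)ⁿ (1 - Δ)ᵐ` when `0 ≤ k ≤ m`.
Counting with the uniform measure, the symmetry `x ↦ !x` puts half of the `2ⁿ` samples at
`k ≥ 0`, and Chebyshev's inequality (the margins `k` have square sum `n 2ⁿ`) puts at most a quarter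
at `k > m` once `4n ≤ (m + 1)²`. With `m = ⌊√(4n)⌋` and `n Δ² ≤ 1`, `log (1 - t) ≥ -t / (1 - t)`
gives `(1 - Δ²)ⁿ (1 - Δ)ᵐ ≥ e^(-3.1) ≥ 1/25`, so the vote fails with probability at least
`1/4 · 1/25`.
-/

open MeasureTheory Finset

lemma prod_comp_eq_pow_mul_pow {ι M : Type*} [Fintype ι] [CommMonoid M] (f : Bool → M)
    (x : ι → Bool) : ∏ i, f (x i) = f true ^ #{i | x i = true} * f false ^ #{i | x i = false} := by
  rw [← prod_filter_mul_prod_filter_not univ fun i => x i = true]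
  simp only [Bool.not_eq_true]
  rw [prod_congr rfl fun i hi => by rw [(mem_filter.mp hi).2], prod_const,
    prod_congr rfl fun i hi => by rw [(mem_filter.mp hi).2], prod_const]

lemma Finset.card_filter_true_add_card_filter_false {ι : Type*} [Fintype ι] (x : ι → Bool) :
    #{i | x i = true} + #{i | x i = false} = Fintype.card ι := by
  simpa using card_filter_add_card_filter_not (s := univ) (p := fun i => x i = true)

namespace Majority

variable {ι : Type*} [Fintype ι]

def voteSign (b : Bool) : ℤ := if b then -1 else 1

lemma voteSign_not (b : Bool) : voteSign (!b) = -voteSign b := by cases b <;> rfl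

lemma voteSign_mul_self (b : Bool) : voteSign b * voteSign b = 1 := by cases b <;> rfl

def margin (x : ι → Bool) : ℤ := ∑ i, voteSign (x i)

lemma margin_eq_card_sub_card (x : ι → Bool) :
    margin x = (#{i | x i = false} : ℤ) - #{i | x i = true} := by
  simp only [margin, voteSign, sum_ite, sum_const]
  simp [Bool.not_eq_true]
  ring

lemma margin_not (x : ι → Bool) : margin (fun i => !x i) = -margin x := by
  simp only [margin, voteSign_not, sum_neg_distrib]

variable [DecidableEq ι]

lemma sum_voteSign_mul_voteSign (i j : ι) :
    ∑ x : ι → Bool, voteSign (x i) * voteSign (x j) =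
      if i = j then (Fintype.card (ι → Bool) : ℤ) else 0 := by
  split_ifs with hij
  · simp [hij, voteSign_mul_self]
  · -- flipping the vote `x i` negates the summand
    have hflip := Function.Bijective.sum_comp (Function.Involutive.bijective
      (f := fun x : ι → Bool => Function.update x i (!x i)) fun x => by simp)
      fun x => voteSign (x i) * voteSign (x j)
    simp only [Function.update_self, Function.update_of_ne (Ne.symm hij), voteSign_not, neg_mul,
      sum_neg_distrib] at hflip
    omega

lemma sum_margin_sq :
    ∑ x : ι → Bool, margin x ^ 2 = Fintype.card ι * 2 ^ Fintype.card ι := by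
  calc ∑ x : ι → Bool, margin x ^ 2
      = ∑ i, ∑ j, ∑ x : ι → Bool, voteSign (x i) * voteSign (x j) := by
        simp only [margin, sq, sum_mul_sum]
        rw [sum_comm]
        exact sum_congr rfl fun i _ => sum_comm
    _ = Fintype.card ι * 2 ^ Fintype.card ι := by simp [sum_voteSign_mul_voteSign]

lemma card_univ_le_two_mul_card_margin_nonneg :
    2 ^ Fintype.card ι ≤ 2 * #{x : ι → Bool | 0 ≤ margin x} := by
  have hneg : #{x : ι → Bool | ¬0 ≤ margin x} ≤ #{x : ι → Bool | 0 ≤ margin x} :=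
    card_le_card_of_injOn (fun x i => !x i)
      (fun x hx => by
        simp only [coe_filter, Set.mem_ofPred_eq, mem_univ, true_and, margin_not] at hx ⊢
        omega)
      (fun x _ y _ hxy => funext fun i => by simpa using congrFun hxy i)
  have htotal := card_filter_add_card_filter_not (s := (univ : Finset (ι → Bool)))
    (p := fun x => 0 ≤ margin x)
  simp only [card_univ, Fintype.card_fun, Fintype.card_bool] at htotal
  omega

lemma card_lt_margin_mul_sq_le (m : ℕ) :
    #{x : ι → Bool | (m : ℤ) < margin x} * (m + 1) ^ 2 ≤
      Fintype.card ι * 2 ^ Fintype.card ι := by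
  have key : (#{x : ι → Bool | (m : ℤ) < margin x} : ℤ) * (m + 1) ^ 2 ≤
      Fintype.card ι * 2 ^ Fintype.card ι :=
    calc (#{x : ι → Bool | (m : ℤ) < margin x} : ℤ) * (m + 1) ^ 2
        ≤ ∑ x ∈ {x : ι → Bool | (m : ℤ) < margin x}, margin x ^ 2 := by
          rw [← nsmul_eq_mul]
          exact card_nsmul_le_sum _ _ _ fun x hx => by
            have := (mem_filter.mp hx).2
            nlinarith
      _ ≤ ∑ x : ι → Bool, margin x ^ 2 :=
          sum_le_sum_of_subset_of_nonneg (filter_subset _ _) fun x _ _ => sq_nonneg _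
      _ = Fintype.card ι * 2 ^ Fintype.card ι := sum_margin_sq
  exact_mod_cast key

lemma card_univ_le_four_mul_card_margin_mem_Icc (m : ℕ) (hm : 4 * Fintype.card ι ≤ (m + 1) ^ 2) :
    2 ^ Fintype.card ι ≤ 4 * #{x : ι → Bool | 0 ≤ margin x ∧ margin x ≤ m} := by
  have hsplit : #{x : ι → Bool | 0 ≤ margin x} ≤
      #{x : ι → Bool | 0 ≤ margin x ∧ margin x ≤ m} + #{x : ι → Bool | (m : ℤ) < margin x} := by
    refine (card_le_card fun x hx => ?_).trans (card_union_le _ _)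
    simp only [mem_union, mem_filter, mem_univ, true_and] at hx ⊢
    omega
  have htail : 4 * #{x : ι → Bool | (m : ℤ) < margin x} ≤ 2 ^ Fintype.card ι := by
    refine le_of_mul_le_mul_right ?_ (by positivity : 0 < (m + 1) ^ 2)
    calc 4 * #{x : ι → Bool | (m : ℤ) < margin x} * (m + 1) ^ 2
        ≤ 4 * (Fintype.card ι * 2 ^ Fintype.card ι) := by
          rw [mul_assoc]; exact Nat.mul_le_mul_left 4 (card_lt_margin_mul_sq_le m)
      _ ≤ 2 ^ Fintype.card ι * (m + 1) ^ 2 := by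
          rw [← mul_assoc, mul_comm _ ((m + 1) ^ 2)]; exact Nat.mul_le_mul_right _ hm
  have := card_univ_le_two_mul_card_margin_nonneg (ι := ι)
  omega

end Majority

lemma mul_pow_mul_pow_le_pow_mul_pow {u v : ℝ} (huv : 0 ≤ u * v) (huv' : u * v ≤ 1) (hv : 0 ≤ v)
    (hv' : v ≤ 1) {i j n m : ℕ} (hij : i ≤ j) (hin : i ≤ n) (hjim : j - i ≤ m) :
    (u * v) ^ n * v ^ m ≤ u ^ i * v ^ j := by
  calc (u * v) ^ n * v ^ m ≤ (u * v) ^ i * v ^ (j - i) :=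
        mul_le_mul (pow_le_pow_of_le_one huv huv' hin) (pow_le_pow_of_le_one hv hv' hjim)
          (by positivity) (by positivity)
    _ = u ^ i * v ^ j := by
        rw [mul_pow, mul_assoc, ← pow_add, Nat.add_sub_cancel' hij]

lemma exp_neg_mul_div_le_one_sub_pow {t : ℝ} (ht : t < 1) (k : ℕ) :
    Real.exp (-(k * t / (1 - t))) ≤ (1 - t) ^ k := by
  have hpos : 0 < 1 - t := by linarith
  have hlog : -(t / (1 - t)) ≤ Real.log (1 - t) := by
    have := Real.one_sub_inv_le_log_of_pos hpos
    rwa [show 1 - (1 - t)⁻¹ = -(t / (1 - t)) by field_simp; ring] at this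
  calc Real.exp (-(k * t / (1 - t))) ≤ Real.exp (k * Real.log (1 - t)) := by
        rw [Real.exp_le_exp, mul_div_assoc, ← mul_neg]
        exact mul_le_mul_of_nonneg_left hlog k.cast_nonneg
    _ = (1 - t) ^ k := by rw [← Real.log_pow, Real.exp_log (pow_pos hpos k)]

lemma exp_three_point_one_le_twentyfive : Real.exp 3.1 ≤ 25 := by
  have hexp : Real.exp 3.1 = Real.exp 1 ^ 3 * Real.exp 0.1 := by
    rw [← Real.exp_nat_mul, ← Real.exp_add]; norm_num
  have he : Real.exp 1 ^ 3 ≤ 2.7182818286 ^ 3 :=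
    pow_le_pow_left₀ (Real.exp_pos 1).le Real.exp_one_lt_d9.le 3
  have he' : Real.exp 0.1 ≤ 1 / (1 - 0.1) :=
    Real.exp_bound_div_one_sub_of_interval (by norm_num) (by norm_num)
  calc Real.exp 3.1 ≤ 2.7182818286 ^ 3 * (1 / (1 - 0.1)) := by
        rw [hexp]; exact mul_le_mul he he' (Real.exp_pos _).le (by positivity)
    _ ≤ 25 := by norm_num

lemma one_div_twentyfive_le_one_sub_sq_pow_mul_one_sub_pow {Δ : ℝ} (hΔ : 0 ≤ Δ)
    (hΔ' : Δ ≤ 1 / 100) {n m : ℕ} (hn : n * Δ ^ 2 ≤ 1) (hm : m * Δ ≤ 2) :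
    1 / 25 ≤ (1 - Δ ^ 2) ^ n * (1 - Δ) ^ m := by
  have hsq : Δ ^ 2 ≤ Δ := by nlinarith
  have hexponent : n * Δ ^ 2 / (1 - Δ ^ 2) + m * Δ / (1 - Δ) ≤ 3.1 := by
    have h1 : n * Δ ^ 2 / (1 - Δ ^ 2) ≤ 1 / (1 - Δ) := by
      rw [div_le_div_iff₀ (by nlinarith) (by linarith)]; nlinarith
    have h2 : m * Δ / (1 - Δ) ≤ 2 / (1 - Δ) := div_le_div_of_nonneg_right hm (by linarith)
    have h3 : 3 / (1 - Δ) ≤ 3.1 := by rw [div_le_iff₀ (by linarith)]; linarith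
    linarith [show 1 / (1 - Δ) + 2 / (1 - Δ) = 3 / (1 - Δ) by ring]
  calc (1 / 25 : ℝ) ≤ Real.exp (-3.1) := by
        rw [Real.exp_neg, one_div]
        exact inv_anti₀ (Real.exp_pos _) exp_three_point_one_le_twentyfive
    _ ≤ Real.exp (-(n * Δ ^ 2 / (1 - Δ ^ 2))) * Real.exp (-(m * Δ / (1 - Δ))) := by
        rw [← Real.exp_add, Real.exp_le_exp]; linarith
    _ ≤ (1 - Δ ^ 2) ^ n * (1 - Δ) ^ m :=
        mul_le_mul (exp_neg_mul_div_le_one_sub_pow (by nlinarith) n)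
          (exp_neg_mul_div_le_one_sub_pow (by linarith) m) (Real.exp_pos _).le
          (pow_nonneg (by nlinarith) n)

lemma MeasureTheory.Measure.pi_exists_mem {ι α : Type*} [Fintype ι] [MeasurableSpace α]
    (μ : Measure α) [IsProbabilityMeasure μ] {s : Set α} (hs : MeasurableSet s) :
    Measure.pi (fun _ : ι => μ) {x | ∃ i, x i ∈ s} = 1 - μ sᶜ ^ Fintype.card ι := by
  have hcompl : {x : ι → α | ∃ i, x i ∈ s} = (Set.univ.pi fun _ => sᶜ)ᶜ := by
    ext x; simp
  rw [hcompl, prob_compl_eq_one_sub (MeasurableSet.univ_pi fun _ => hs.compl), Measure.pi_pi,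
    prod_const, card_univ]

noncomputable def twoAnswerPMF (Δ : ℝ) (hΔ : |Δ| ≤ 1) : PMF Bool :=
  PMF.ofFintype (fun b => ENNReal.ofReal (cond b ((1 + Δ) / 2) ((1 - Δ) / 2))) <| by
    obtain ⟨h, h'⟩ := abs_le.mp hΔ
    rw [Fintype.sum_bool, cond_true, cond_false, ← ENNReal.ofReal_add (by linarith) (by linarith),
      show (1 + Δ) / 2 + (1 - Δ) / 2 = 1 by ring, ENNReal.ofReal_one]

namespace twoAnswerPMF

variable {Δ : ℝ} (hΔ : |Δ| ≤ 1)

lemma apply (b : Bool) :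
    twoAnswerPMF Δ hΔ b = ENNReal.ofReal (cond b ((1 + Δ) / 2) ((1 - Δ) / 2)) := rfl

lemma toReal_true_sub_toReal_false :
    (twoAnswerPMF Δ hΔ true).toReal - (twoAnswerPMF Δ hΔ false).toReal = Δ := by
  obtain ⟨h, h'⟩ := abs_le.mp hΔ
  rw [apply, apply, cond_true, cond_false, ENNReal.toReal_ofReal (by linarith),
    ENNReal.toReal_ofReal (by linarith)]
  ring

variable {ι : Type*} [Fintype ι]

lemma pi_singleton (x : ι → Bool) :
    Measure.pi (fun _ : ι => (twoAnswerPMF Δ hΔ).toMeasure) {x} =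
      ENNReal.ofReal ((1 + Δ) ^ #{i | x i = true} * (1 - Δ) ^ #{i | x i = false} /
        2 ^ Fintype.card ι) := by
  obtain ⟨h, h'⟩ := abs_le.mp hΔ
  simp only [Measure.pi_singleton, PMF.toMeasure_apply_singleton _ _ (MeasurableSet.singleton _),
    apply]
  rw [← ENNReal.ofReal_prod_of_nonneg fun i _ => by cases x i <;> simp <;> linarith,
    prod_comp_eq_pow_mul_pow (fun b => cond b ((1 + Δ) / 2) ((1 - Δ) / 2)), cond_true,
    cond_false, div_pow, div_pow, div_mul_div_comm, ← pow_add,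
    card_filter_true_add_card_filter_false]

lemma ofReal_le_pi_exists_eq_true (hΔ₀ : 0 ≤ Δ) (hι : 7 ≤ Fintype.card ι) :
    ENNReal.ofReal 0.99 ≤
      Measure.pi (fun _ : ι => (twoAnswerPMF Δ hΔ).toMeasure) {x | ∃ i, x i = true} := by
  obtain ⟨-, h'⟩ := abs_le.mp hΔ
  have hfalse : (twoAnswerPMF Δ hΔ).toMeasure {true}ᶜ = ENNReal.ofReal ((1 - Δ) / 2) := by
    rw [Bool.compl_singleton, PMF.toMeasure_apply_singleton _ _ (MeasurableSet.singleton _),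
      apply, Bool.not_true, cond_false]
  have hmiss : ((1 - Δ) / 2) ^ Fintype.card ι ≤ 0.01 :=
    calc ((1 - Δ) / 2) ^ Fintype.card ι ≤ (1 / 2) ^ Fintype.card ι :=
          pow_le_pow_left₀ (by linarith) (by linarith) _
      _ ≤ (1 / 2) ^ 7 := pow_le_pow_of_le_one (by norm_num) (by norm_num) hι
      _ ≤ 0.01 := by norm_num
  have hexists := Measure.pi_exists_mem (ι := ι) (twoAnswerPMF Δ hΔ).toMeasure
    (MeasurableSet.singleton true)
  simp only [Set.mem_singleton_iff] at hexists
  rw [hexists, hfalse, ← ENNReal.ofReal_pow (by linarith), ← ENNReal.ofReal_one,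
    ← ENNReal.ofReal_sub _ (pow_nonneg (by linarith) _)]
  exact ENNReal.ofReal_le_ofReal (by linarith)

variable [DecidableEq ι]

lemma ofReal_le_pi_margin_mem_Icc (hΔ₀ : 0 ≤ Δ) {m : ℕ} (hm : 4 * Fintype.card ι ≤ (m + 1) ^ 2) :
    ENNReal.ofReal ((1 - Δ ^ 2) ^ Fintype.card ι * (1 - Δ) ^ m / 4) ≤
      Measure.pi (fun _ : ι => (twoAnswerPMF Δ hΔ).toMeasure)
        {x | 0 ≤ Majority.margin x ∧ Majority.margin x ≤ m} := by
  obtain ⟨h, h'⟩ := abs_le.mp hΔ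
  set n := Fintype.card ι
  set T : Finset (ι → Bool) := {x | 0 ≤ Majority.margin x ∧ Majority.margin x ≤ m}
  set w : (ι → Bool) → ℝ :=
    fun x => (1 + Δ) ^ #{i | x i = true} * (1 - Δ) ^ #{i | x i = false} / 2 ^ n
  have hw : ∀ x ∈ T, (1 - Δ ^ 2) ^ n * (1 - Δ) ^ m / 2 ^ n ≤ w x := fun x hx => by
    have hmargin := (mem_filter.mp hx).2
    rw [Majority.margin_eq_card_sub_card] at hmargin
    have hcard := card_filter_true_add_card_filter_false x
    refine div_le_div_of_nonneg_right ?_ (by positivity)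
    rw [show 1 - Δ ^ 2 = (1 + Δ) * (1 - Δ) by ring]
    exact mul_pow_mul_pow_le_pow_mul_pow (by nlinarith) (by nlinarith) (by linarith) (by linarith)
      (by omega) (by omega) (by omega)
  have hsum : (1 - Δ ^ 2) ^ n * (1 - Δ) ^ m / 4 ≤ ∑ x ∈ T, w x :=
    calc (1 - Δ ^ 2) ^ n * (1 - Δ) ^ m / 4
        = 2 ^ n / 4 * ((1 - Δ ^ 2) ^ n * (1 - Δ) ^ m / 2 ^ n) := by field_simp
      _ ≤ #T * ((1 - Δ ^ 2) ^ n * (1 - Δ) ^ m / 2 ^ n) := by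
          refine mul_le_mul_of_nonneg_right ?_ (div_nonneg (mul_nonneg
            (pow_nonneg (by nlinarith) n) (pow_nonneg (by linarith) m)) (by positivity))
          have hcount := Majority.card_univ_le_four_mul_card_margin_mem_Icc (ι := ι) m hm
          rw [div_le_iff₀ (by norm_num)]
          exact_mod_cast hcount.trans_eq (mul_comm _ _)
      _ ≤ ∑ x ∈ T, w x := by rw [← nsmul_eq_mul]; exact card_nsmul_le_sum _ _ _ hw
  calc ENNReal.ofReal ((1 - Δ ^ 2) ^ n * (1 - Δ) ^ m / 4)
      ≤ ENNReal.ofReal (∑ x ∈ T, w x) := ENNReal.ofReal_le_ofReal hsum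
    _ = ∑ x ∈ T, Measure.pi (fun _ : ι => (twoAnswerPMF Δ hΔ).toMeasure) {x} := by
        rw [ENNReal.ofReal_sum_of_nonneg fun x _ => by positivity]
        exact sum_congr rfl fun x _ => (pi_singleton hΔ x).symm
    _ = _ := by rw [sum_measure_singleton, coe_filter_univ]

lemma ofReal_le_pi_card_true_le_card_false (hΔ₀ : 0 ≤ Δ) (hΔ₁ : Δ ≤ 1 / 100)
    (hι : Fintype.card ι * Δ ^ 2 ≤ 1) :
    ENNReal.ofReal 0.01 ≤ Measure.pi (fun _ : ι => (twoAnswerPMF Δ hΔ).toMeasure)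
      {x | #{i | x i = true} ≤ #{i | x i = false}} := by
  set m := Nat.sqrt (4 * Fintype.card ι)
  have hm : 4 * Fintype.card ι ≤ (m + 1) ^ 2 := (Nat.lt_succ_sqrt' _).le
  have hmΔ : m * Δ ≤ 2 := by
    have hsq : (m : ℝ) ^ 2 ≤ 4 * Fintype.card ι := by exact_mod_cast Nat.sqrt_le' _
    nlinarith
  calc ENNReal.ofReal 0.01
      ≤ ENNReal.ofReal ((1 - Δ ^ 2) ^ Fintype.card ι * (1 - Δ) ^ m / 4) :=
        ENNReal.ofReal_le_ofReal <| by
          linarith [one_div_twentyfive_le_one_sub_sq_pow_mul_one_sub_pow hΔ₀ hΔ₁ hι hmΔ]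
    _ ≤ _ := ofReal_le_pi_margin_mem_Icc hΔ hΔ₀ hm
    _ ≤ _ := measure_mono fun x hx => by
        have := Majority.margin_eq_card_sub_card x
        simp only [Set.mem_ofPred_eq] at hx ⊢
        omega

end twoAnswerPMF

/-- Separation between self-consistency and best-of-n: for every `Δ ∈ (0, 10⁻⁷)` there is a
distribution on two answers (`true` the correct one) with gap `Δ` such that best-of-n with
`n = ⌈10/Δ⌉` samples sees the correct answer with probability at least `0.99`, while
majority vote with any `n ≤ 1/Δ²` samples fails with probability at least `0.01`. -/
theorem separation_self_consistency_best_of_n (Δ : ℝ) (h0 : 0 < Δ) (h1 : Δ < 1e-7) :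
    ∃ p : PMF Bool,
      ((p true).toReal - (p false).toReal = Δ) ∧
      (ENNReal.ofReal 0.99 ≤
        (Measure.pi fun _ : Fin (⌈10/Δ⌉₊) => p.toMeasure) {x | ∃ i, x i = true}) ∧
      (∀ n : ℕ, (n : ℝ) ≤ 1/Δ^2 →
        ENNReal.ofReal 0.01 ≤
          (Measure.pi fun _ : Fin n => p.toMeasure)
            {x | (Finset.univ.filter fun i => x i = true).card ≤
                 (Finset.univ.filter fun i => x i = false).card}) := by
  have hΔ : |Δ| ≤ 1 := abs_le.mpr ⟨by linarith, by linarith⟩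
  refine ⟨twoAnswerPMF Δ hΔ, twoAnswerPMF.toReal_true_sub_toReal_false hΔ, ?_, fun n hn => ?_⟩
  · refine twoAnswerPMF.ofReal_le_pi_exists_eq_true hΔ h0.le ?_
    have hceil : 10 / Δ ≤ ⌈10 / Δ⌉₊ := Nat.le_ceil _
    have hten : 10 ≤ 10 / Δ := by rw [le_div_iff₀ h0]; linarith
    rw [Fintype.card_fin]
    exact_mod_cast (by linarith : (7 : ℝ) ≤ ⌈10 / Δ⌉₊)
  · refine twoAnswerPMF.ofReal_le_pi_card_true_le_card_false hΔ h0.le (by linarith) ?_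
    rwa [Fintype.card_fin, ← le_div_iff₀ (by positivity)]
end

section
/- Johnson–Lindenstrauss-type near-orthogonal family: for any N ≥ 2 and any d ≥ 32·ln N, there exist unit-norm vectors γ_1,…,γ_N ∈ ℝ^d such that |⟨γ_i, γ_j⟩| ≤ 1/2 for all i ≠ j. -/
/-!
Take `γ_x = d^{-1/2} (±1)_{i}` for sign patterns `x ∈ {0,1}^d`; then
`⟪γ_x, γ_y⟫ = 1 - 2 h(x, y) / d` with `h` the Hamming distance, so it suffices to find `N`
patterns at pairwise Hamming distance in `[d/4, 3d/4]`. By the Chernoff bound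
`#{y | h(x, y) ≥ 3d/4} ≤ 4^d / 3^{3d/4}` and its mirror image for the lower tail, each
pattern excludes at most `B = 2 · 4^d / 3^{3d/4}` others, and a greedy choice succeeds as long as
`N B < 2^d`, which is what `d ≥ 32 log N` guarantees.
-/

open scoped RealInnerProductSpace
open Finset Function

section Hamming

variable {ι : Type*} [Fintype ι]

lemma pow_hammingDist_eq_prod {R : Type*} [CommMonoid R] (x y : ι → Bool) (a : R) :
    a ^ hammingDist x y = ∏ i, if x i = y i then 1 else a := by
  rw [prod_ite, prod_const_one, one_mul, prod_const, hammingDist]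

lemma sum_pow_hammingDist [DecidableEq ι] {R : Type*} [CommSemiring R] (x : ι → Bool) (a : R) :
    ∑ y, a ^ hammingDist x y = (1 + a) ^ Fintype.card ι := by
  have hcoord : ∀ i, ∑ b : Bool, (if x i = b then 1 else a) = 1 + a := fun i => by
    rw [Fintype.sum_bool]; cases x i <;> simp [add_comm]
  calc ∑ y, a ^ hammingDist x y = ∑ y : ι → Bool, ∏ i, if x i = y i then 1 else a :=
        sum_congr rfl fun y _ => pow_hammingDist_eq_prod x y a
    _ = ∏ i, ∑ b : Bool, if x i = b then 1 else a :=
        (Fintype.prod_sum fun i (b : Bool) => if x i = b then (1 : R) else a).symm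
    _ = (1 + a) ^ Fintype.card ι := by simp_rw [hcoord, prod_const, card_univ]

lemma hammingDist_not_left (x y : ι → Bool) :
    hammingDist (fun i => !x i) y = Fintype.card ι - hammingDist x y := by
  have h := card_filter_add_card_filter_not (s := univ) (fun i => x i ≠ y i)
  simp only [card_univ, not_not] at h
  rw [hammingDist, hammingDist, ← h, Nat.add_sub_cancel_left]
  congr 1; ext i; cases x i <;> cases y i <;> simp

/-- Chernoff bound: Markov's inequality applied to `a ^ hammingDist x y`. -/
lemma card_le_hammingDist_mul_rpow_le [DecidableEq ι] {a r : ℝ} (ha : 1 ≤ a) (x : ι → Bool) :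
    #{y | r ≤ hammingDist x y} * a ^ r ≤ (1 + a) ^ Fintype.card ι := by
  calc #{y | r ≤ hammingDist x y} * a ^ r
      = ∑ y with r ≤ hammingDist x y, a ^ r := by rw [sum_const, nsmul_eq_mul]
    _ ≤ ∑ y with r ≤ hammingDist x y, a ^ hammingDist x y := by
        gcongr with y hy
        rw [← Real.rpow_natCast]
        exact Real.rpow_le_rpow_of_exponent_le ha (mem_filter.1 hy).2
    _ ≤ ∑ y, a ^ hammingDist x y :=
        sum_le_sum_of_subset_of_nonneg (filter_subset _ _) fun _ _ _ => by positivity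
    _ = (1 + a) ^ Fintype.card ι := sum_pow_hammingDist x a

lemma card_unbalanced_mul_rpow_le [DecidableEq ι] (x : ι → Bool) :
    #{y | (Fintype.card ι : ℝ) / 2 < |(Fintype.card ι : ℝ) - 2 * hammingDist x y|}
      * (3 : ℝ) ^ (3 / 4 * (Fintype.card ι : ℝ)) ≤ 2 * 4 ^ Fintype.card ι := by
  set n := (Fintype.card ι : ℝ)
  have hfar : ∀ x' : ι → Bool, #{y | 3 / 4 * n ≤ hammingDist x' y} * (3 : ℝ) ^ (3 / 4 * n)
      ≤ 4 ^ Fintype.card ι := fun x' => by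
    simpa [show (1 : ℝ) + 3 = 4 by norm_num] using
      card_le_hammingDist_mul_rpow_le (r := 3 / 4 * n) (by norm_num : (1 : ℝ) ≤ 3) x'
  -- the lower tail of `hammingDist x` is the upper tail of `hammingDist (!x)`
  have hsub : ({y | n / 2 < |n - 2 * hammingDist x y|} : Finset (ι → Bool))
      ⊆ ({y | 3 / 4 * n ≤ hammingDist x y} : Finset (ι → Bool))
        ∪ ({y | 3 / 4 * n ≤ hammingDist (fun i => !x i) y} : Finset (ι → Bool)) := by
    intro y hy
    have hle : hammingDist x y ≤ Fintype.card ι := hammingDist_le_card_fintype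
    simp only [mem_filter, mem_univ, true_and, mem_union, hammingDist_not_left,
      Nat.cast_sub hle] at hy ⊢
    rcases lt_abs.1 hy with h | h
    · right; linarith
    · left; linarith
  calc _ ≤ ((#{y | 3 / 4 * n ≤ hammingDist x y} : ℝ)
        + #{y | 3 / 4 * n ≤ hammingDist (fun i => !x i) y}) * (3 : ℝ) ^ (3 / 4 * n) := by
        gcongr
        exact_mod_cast (card_le_card hsub).trans (card_union_le _ _)
    _ ≤ 2 * 4 ^ Fintype.card ι := by linarith [hfar x, hfar fun i => !x i]

end Hamming

theorem exists_pairwise_of_card_not_rel_le {α : Type*} [Fintype α] {r : α → α → Prop}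
    [DecidableRel r] [Std.Symm r] {B : ℕ} (hB : ∀ x, #{y | ¬r x y} ≤ B) :
    ∀ {t : ℕ}, t * B < Fintype.card α → ∃ f : Fin t → α, Pairwise (r on f)
  | 0, _ => ⟨Fin.elim0, fun i => i.elim0⟩
  | t + 1, ht => by
    classical
    obtain ⟨f, hf⟩ := exists_pairwise_of_card_not_rel_le hB
      ((Nat.mul_le_mul_right B t.le_succ).trans_lt ht)
    have hcard : #(univ.biUnion fun i => ({y | ¬r (f i) y} : Finset α)) < #(univ : Finset α) :=
      calc _ ≤ ∑ i, #({y | ¬r (f i) y} : Finset α) := card_biUnion_le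
        _ ≤ t * B := (sum_le_card_nsmul univ _ B fun i _ => hB (f i)).trans (by simp)
        _ < Fintype.card α := (Nat.mul_le_mul_right B t.le_succ).trans_lt ht
    obtain ⟨y, -, hy⟩ := exists_mem_notMem_of_card_lt_card hcard
    have hfy : ∀ i, r (f i) y := by simpa using hy
    refine ⟨Fin.snoc f y, fun i j hij => ?_⟩
    cases i using Fin.lastCases with
    | last => cases j using Fin.lastCases with
      | last => exact absurd rfl hij
      | cast j => simpa [onFun] using Std.Symm.symm _ _ (hfy j)
    | cast i => cases j using Fin.lastCases with
      | last => simpa [onFun] using hfy i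
      | cast j => simpa [onFun] using hf (ne_of_apply_ne Fin.castSucc hij)

lemma one_div_sixteen_add_log_two_lt : 1 / 16 + Real.log 2 < 3 / 4 * Real.log 3 := by
  have h : Real.log (2 ^ 16 * Real.exp 1) < Real.log (3 ^ 12) :=
    Real.log_lt_log (by positivity) (by nlinarith [Real.exp_one_lt_d9])
  rw [Real.log_mul (by positivity) (Real.exp_pos 1).ne', Real.log_exp, Real.log_pow,
    Real.log_pow] at h
  push_cast at h
  linarith

/-- Since `log 2 ≤ log N ≤ d / 32`, taking logarithms reduces this to
`one_div_sixteen_add_log_two_lt`. -/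
lemma two_mul_mul_four_pow_lt_two_pow_mul_rpow {N d : ℕ} (hN : 2 ≤ N)
    (hd : 32 * Real.log N ≤ d) : 2 * N * (4 : ℝ) ^ d < 2 ^ d * 3 ^ (3 / 4 * (d : ℝ)) := by
  have hlogN : Real.log 2 ≤ Real.log N := Real.log_le_log two_pos (by exact_mod_cast hN)
  have hd0 : (0 : ℝ) < d := by linarith [Real.log_pos one_lt_two]
  have hN0 : (0 : ℝ) < N := by positivity
  rw [← Real.log_lt_log_iff (by positivity) (by positivity), Real.log_mul (by positivity)
    (by positivity), Real.log_mul (by positivity) (by positivity), Real.log_mul (by positivity)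
    (by positivity), Real.log_pow, Real.log_pow, Real.log_rpow three_pos,
    show (4 : ℝ) = 2 ^ 2 by norm_num, Real.log_pow]
  push_cast
  nlinarith [mul_lt_mul_of_pos_left one_div_sixteen_add_log_two_lt hd0]

theorem exists_pairwise_balanced_hammingDist {ι : Type*} [Fintype ι] [DecidableEq ι] {N : ℕ}
    (hN : 2 ≤ N) (hd : 32 * Real.log N ≤ Fintype.card ι) :
    ∃ f : Fin N → ι → Bool, Pairwise fun i j =>
      |(Fintype.card ι : ℝ) - 2 * hammingDist (f i) (f j)| ≤ Fintype.card ι / 2 := by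
  set d := Fintype.card ι
  let r (x y : ι → Bool) : Prop := |(d : ℝ) - 2 * hammingDist x y| ≤ d / 2
  have : Std.Symm r := ⟨fun x y h => by simpa only [r, hammingDist_comm] using h⟩
  set c := (3 : ℝ) ^ (3 / 4 * (d : ℝ))
  have hc : 0 < c := by positivity
  have hB (x : ι → Bool) : #{y | ¬r x y} ≤ ⌊2 * 4 ^ d / c⌋₊ :=
    Nat.le_floor <| by
      rw [le_div_iff₀ hc]; simpa [r, not_le] using card_unbalanced_mul_rpow_le x
  have hNB : (N : ℝ) * ⌊2 * 4 ^ d / c⌋₊ < 2 ^ d :=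
    calc (N : ℝ) * ⌊2 * 4 ^ d / c⌋₊ ≤ N * (2 * 4 ^ d / c) := by
          gcongr; exact Nat.floor_le (by positivity)
      _ < 2 ^ d := by
          rw [← mul_div_assoc, div_lt_iff₀ hc]
          linarith [two_mul_mul_four_pow_lt_two_pow_mul_rpow hN hd]
  exact exists_pairwise_of_card_not_rel_le hB <| by
    simpa only [Fintype.card_fun, Fintype.card_bool] using
      (by exact_mod_cast hNB : N * ⌊2 * 4 ^ d / c⌋₊ < 2 ^ d)

section SignVector

variable {ι : Type*} [Fintype ι]

def signVector (x : ι → Bool) : EuclideanSpace ℝ ι :=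
  WithLp.toLp 2 fun i => if x i then 1 else -1

lemma inner_signVector (x y : ι → Bool) :
    ⟪signVector x, signVector y⟫ = Fintype.card ι - 2 * hammingDist x y := by
  have h : ∀ i, (if y i then (1 : ℝ) else -1) * (if x i then 1 else -1)
      = 1 - 2 * if x i ≠ y i then 1 else 0 := fun i => by
    cases x i <;> cases y i <;> norm_num
  simp only [signVector, PiLp.inner_apply, RCLike.inner_apply, conj_trivial, h, sum_sub_distrib,
    ← mul_sum, sum_boole, sum_const, card_univ, nsmul_one, hammingDist]

lemma norm_signVector (x : ι → Bool) : ‖signVector x‖ = √(Fintype.card ι) := by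
  rw [norm_eq_sqrt_real_inner, inner_signVector, hammingDist_self, Nat.cast_zero, mul_zero,
    sub_zero]

noncomputable def normalizedSignVector (x : ι → Bool) : EuclideanSpace ℝ ι :=
  (√(Fintype.card ι))⁻¹ • signVector x

lemma norm_normalizedSignVector [Nonempty ι] (x : ι → Bool) : ‖normalizedSignVector x‖ = 1 := by
  have : 0 < √(Fintype.card ι : ℝ) := Real.sqrt_pos.2 (by exact_mod_cast Fintype.card_pos)
  rw [normalizedSignVector, norm_smul, norm_signVector, norm_inv, Real.norm_of_nonneg this.le,
    inv_mul_cancel₀ this.ne']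

lemma inner_normalizedSignVector (x y : ι → Bool) :
    ⟪normalizedSignVector x, normalizedSignVector y⟫
      = (Fintype.card ι - 2 * hammingDist x y) / Fintype.card ι := by
  rw [normalizedSignVector, normalizedSignVector, real_inner_smul_left, real_inner_smul_right,
    inner_signVector, ← mul_assoc, ← mul_inv, Real.mul_self_sqrt (Nat.cast_nonneg _),
    inv_mul_eq_div]

end SignVector

/-- Johnson–Lindenstrauss-type near-orthogonal family: for `N ≥ 2` and `d ≥ 32·ln N`
there exist `N` unit vectors in `ℝ^d` with pairwise inner products at most `1/2`
in absolute value. -/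
theorem near_orthogonal_family_exists (N d : ℕ) (hN : 2 ≤ N)
    (hd : 32 * Real.log N ≤ (d : ℝ)) :
    ∃ γ : Fin N → EuclideanSpace ℝ (Fin d),
      (∀ i, ‖γ i‖ = 1) ∧ ∀ i j, i ≠ j → |⟪γ i, γ j⟫| ≤ 1/2 := by
  have hd0 : (0 : ℝ) < d := by
    linarith [Real.log_pos (by exact_mod_cast hN : (1 : ℝ) < N)]
  have : Nonempty (Fin d) := ⟨⟨0, by exact_mod_cast hd0⟩⟩
  obtain ⟨f, hf⟩ := exists_pairwise_balanced_hammingDist (ι := Fin d) hN (by simpa using hd)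
  refine ⟨fun i => normalizedSignVector (f i), fun i => norm_normalizedSignVector _,
    fun i j hij => ?_⟩
  have hfij := hf hij
  rw [Fintype.card_fin] at hfij
  rw [inner_normalizedSignVector, Fintype.card_fin, abs_div, abs_of_pos hd0, div_le_iff₀ hd0]
  linarith
end
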